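/- Any two admissible mirror factors of a circular word W have distinct centers; consequently, W has at most 2|W| admissible factors. -/

import Mathlib

inductive Letter | u | d | l | r
deriving DecidableEq, Repr

def Letter.comp : Letter → Letter
  | .u => .d
  | .d => .u
  | .l => .r
  | .r => .l

/-- The backtrack of a word: the letterwise complement of the reverse. -/
def backtrack (W : List Letter) : List Letter := W.reverse.map Letter.comp

/-- `X` is a mirror factor of the circular word `W`: some rotation of `W`
factors as `X U X̂ V` with `|U| = |V|`. -/
def MirrorFactor (W X : List Letter) : Prop :=
  ∃ n U V, W.rotate n = X ++ U ++ backtrack X ++ V ∧ U.length = V.length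

/-- A mirror occurrence of `X` in the circular word `W` starting at position `n`. -/
def MirrorOcc (W : List Letter) (n : ℕ) (X : List Letter) : Prop :=
  ∃ U V, W.rotate n = X ++ U ++ backtrack X ++ V ∧ U.length = V.length

/-- An admissible occurrence: a mirror occurrence where `U[1] ≠ comp U[-1]`
and `V[1] ≠ comp V[-1]`. -/
def AdmissibleOcc (W : List Letter) (n : ℕ) (X : List Letter) : Prop :=
  ∃ U V, W.rotate n = X ++ U ++ backtrack X ++ V ∧ U.length = V.length ∧
    (∀ a b, U.head? = some a → U.getLast? = some b → a ≠ Letter.comp b) ∧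
    (∀ a b, V.head? = some a → V.getLast? = some b → a ≠ Letter.comp b)

/-!
Two mirror occurrences with the same center (modulo `2|W|`) are nested: if the longer one is
`X' = A M B` with `|A| = |B| = d > 0` at position `n'`, the shorter one sits at `n' + d` on the
positions of `M`, and its gap `V` must be `Â V' A`, whose first letter is the complement of its
last. Hence an admissible occurrence is the longest mirror occurrence with its center, and two
occurrences with the same center and the same length coincide.
-/

lemma backtrack_append (A B : List Letter) : backtrack (A ++ B) = backtrack B ++ backtrack A := by
  simp [backtrack]

lemma length_backtrack (A : List Letter) : (backtrack A).length = A.length := by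
  simp [backtrack]

lemma head?_backtrack (A : List Letter) : (backtrack A).head? = A.getLast?.map Letter.comp := by
  simp [backtrack]

lemma AdmissibleOcc.mirrorOcc {W : List Letter} {n : ℕ} {X : List Letter}
    (h : AdmissibleOcc W n X) : MirrorOcc W n X :=
  let ⟨U, V, hrot, hlen, _⟩ := h
  ⟨U, V, hrot, hlen⟩

lemma MirrorOcc.eq_take {W : List Letter} {n : ℕ} {X : List Letter} (h : MirrorOcc W n X) :
    X = (W.rotate n).take X.length := by
  obtain ⟨U, V, hrot, -⟩ := h
  rw [hrot, List.append_assoc, List.append_assoc, List.take_left' rfl]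

lemma rotate_mirror_eq (A M B U V : List Letter) :
    (A ++ M ++ B ++ U ++ backtrack (A ++ M ++ B) ++ V).rotate A.length =
      M ++ (B ++ U ++ backtrack B) ++ backtrack M ++ (backtrack A ++ V ++ A) := by
  simp only [backtrack_append, List.append_assoc, List.rotate_append_length_eq]

lemma gap_eq_of_rotate_mirror {A M B U V X' U' V' : List Letter}
    (hAB : A.length = B.length) (hUV : U.length = V.length) (hUV' : U'.length = V'.length)
    (hM : M.length = X'.length)
    (h : (A ++ M ++ B ++ U ++ backtrack (A ++ M ++ B) ++ V).rotate A.length =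
      X' ++ U' ++ backtrack X' ++ V') :
    V' = backtrack A ++ V ++ A := by
  rw [rotate_mirror_eq] at h
  have hlen := congrArg List.length h
  simp only [List.length_append, length_backtrack] at hlen
  refine (List.append_inj_right' h ?_).symm
  simp only [List.length_append, length_backtrack]
  omega

lemma head?_eq_comp_getLast?_of_backtrack {A : List Letter} (hA : A ≠ []) (V : List Letter) :
    ∃ a, (backtrack A ++ V ++ A).head? = some (Letter.comp a) ∧
      (backtrack A ++ V ++ A).getLast? = some a := by
  refine ⟨A.getLast hA, ?_, ?_⟩
  · simp [List.head?_append, head?_backtrack, List.getLast?_eq_some_getLast hA]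
  · simp [List.getLast?_append, List.getLast?_eq_some_getLast hA]

lemma exists_rotate_eq_of_center_eq {W : List Letter} {n n' : ℕ} {X X' : List Letter}
    (hc : (2 * n + X.length) % (2 * W.length) = (2 * n' + X'.length) % (2 * W.length))
    (hlt : X'.length < X.length) :
    ∃ d, 0 < d ∧ X.length = X'.length + 2 * d ∧ W.rotate n' = (W.rotate n).rotate d := by
  have hpar : 2 * n + X.length ≡ 2 * n' + X'.length [MOD 2] := Nat.ModEq.of_mul_right _ hc
  obtain ⟨d, hd, hk⟩ : ∃ d, 0 < d ∧ X.length = X'.length + 2 * d :=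
    ⟨(X.length - X'.length) / 2, by unfold Nat.ModEq at hpar; omega⟩
  have hshift : 2 * (n + d) + X'.length ≡ 2 * n' + X'.length [MOD 2 * W.length] := by
    unfold Nat.ModEq
    rwa [show 2 * (n + d) + X'.length = 2 * n + X.length by omega]
  have hmod : (n + d) % W.length = n' % W.length :=
    Nat.ModEq.mul_left_cancel' two_ne_zero (Nat.ModEq.add_right_cancel' _ hshift)
  refine ⟨d, hd, hk, ?_⟩
  rw [List.rotate_rotate, ← List.rotate_mod, ← hmod, List.rotate_mod]

theorem AdmissibleOcc.length_le_of_center_eq {W : List Letter} {n n' : ℕ} {X X' : List Letter}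
    (h : AdmissibleOcc W n X) (h' : MirrorOcc W n' X')
    (hc : (2 * n + X.length) % (2 * W.length) = (2 * n' + X'.length) % (2 * W.length)) :
    X'.length ≤ X.length := by
  by_contra! hlt
  obtain ⟨d, hd, hk, hrot⟩ := exists_rotate_eq_of_center_eq hc.symm hlt
  obtain ⟨U, V, hX, hUV, -, hV⟩ := h
  obtain ⟨U', V', hX', hUV'⟩ := h'
  obtain ⟨A, M, B, rfl, rfl, hM⟩ :
      ∃ A M B, X' = A ++ M ++ B ∧ A.length = d ∧ M.length = X.length :=
    ⟨X'.take d, (X'.drop d).take X.length, (X'.drop d).drop X.length,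
      by simp, by simp; omega, by simp; omega⟩
  have hAB : A.length = B.length := by simp only [List.length_append] at hk; omega
  rw [hX'] at hrot
  have hgap := gap_eq_of_rotate_mirror hAB hUV' hUV hM (hrot.symm.trans hX)
  obtain ⟨a, ha, ha'⟩ :=
    head?_eq_comp_getLast?_of_backtrack (List.ne_nil_of_length_pos hd) V'
  exact hV _ _ (hgap ▸ ha) (hgap ▸ ha') rfl

lemma MirrorOcc.eq_of_center_eq_of_length_eq {W : List Letter} {n n' : ℕ} {X X' : List Letter}
    (hn : n < W.length) (hn' : n' < W.length) (h : MirrorOcc W n X) (h' : MirrorOcc W n' X')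
    (hc : (2 * n + X.length) % (2 * W.length) = (2 * n' + X'.length) % (2 * W.length))
    (hk : X.length = X'.length) :
    n = n' ∧ X = X' := by
  have hmod : n ≡ n' [MOD W.length] := by
    rw [hk] at hc
    exact Nat.ModEq.mul_left_cancel' two_ne_zero (Nat.ModEq.add_right_cancel' _ hc)
  have hnn' : n = n' := by rwa [Nat.ModEq, Nat.mod_eq_of_lt hn, Nat.mod_eq_of_lt hn'] at hmod
  refine ⟨hnn', ?_⟩
  rw [h.eq_take, h'.eq_take, hnn', hk]

theorem AdmissibleOcc.eq_of_center_eq {W : List Letter} {n n' : ℕ} {X X' : List Letter}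
    (hn : n < W.length) (hn' : n' < W.length) (h : AdmissibleOcc W n X) (h' : AdmissibleOcc W n' X')
    (hc : (2 * n + X.length) % (2 * W.length) = (2 * n' + X'.length) % (2 * W.length)) :
    n = n' ∧ X = X' :=
  h.mirrorOcc.eq_of_center_eq_of_length_eq hn hn' h'.mirrorOcc hc <|
    le_antisymm (h'.length_le_of_center_eq h.mirrorOcc hc.symm)
      (h.length_le_of_center_eq h'.mirrorOcc hc)

theorem admissible_distinct_centers_general (W : List Letter) :
    (∀ n n' X X', n < W.length → n' < W.length →
      AdmissibleOcc W n X → AdmissibleOcc W n' X' →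
      (2 * n + X.length) % (2 * W.length) = (2 * n' + X'.length) % (2 * W.length) →
      n = n' ∧ X = X') ∧
    {p : ℕ × List Letter | p.1 < W.length ∧ AdmissibleOcc W p.1 p.2}.ncard
      ≤ 2 * W.length := by
  refine ⟨fun n n' X X' hn hn' h h' hc => h.eq_of_center_eq hn hn' h' hc, ?_⟩
  refine (Set.ncard_le_ncard_of_injOn (fun p => (2 * p.1 + p.2.length) % (2 * W.length))
    (fun p hp => Nat.mod_lt _ (Nat.mul_pos two_pos (Nat.zero_lt_of_lt hp.1)))
    (fun p hp q hq hpq => Prod.ext_iff.mpr (hp.2.eq_of_center_eq hp.1 hq.1 hq.2 hpq))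
    (Set.finite_Iio _)).trans_eq (Set.ncard_Iio_nat _)

theorem admissible_distinct_centers (W : List Letter) (hW : W ≠ []) :
    (∀ n n' X X', n < W.length → n' < W.length →
      AdmissibleOcc W n X → AdmissibleOcc W n' X' →
      (2 * n + X.length) % (2 * W.length) = (2 * n' + X'.length) % (2 * W.length) →
      n = n' ∧ X = X') ∧
    {p : ℕ × List Letter | p.1 < W.length ∧ AdmissibleOcc W p.1 p.2}.ncard
      ≤ 2 * W.length :=
  admissible_distinct_centers_general W
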